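/- Proposition 2 (full converse characterization): if the derivative with respect to r of exp(w(π_i^C - π_i^D)) is strictly positive for all i = 1,…,N-1 (with w > 0), then exactly one of the following holds: (a) R ≥ S and T ≥ P with at least one inequality strict; (b) R > S, T < P, and N < (R-S+P-T)/(P-T); (c) R < S, T > P, and N < (S-R+T-P)/(S-R). -/

import Mathlib

/-!
The derivative of `r ↦ exp (w (π_i^C - π_i^D))` is `exp (…) · w` times the `r`-slope of the payoff
gap, which is `((N - i)(R - S) + i(T - P)) / N` for every `r`. This slope is affine in `i`, so only
the endpoints `i = 1` and `i = N - 1` matter: `0 < (N - 1)(R - S) + (T - P)` and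
`0 < (R - S) + (N - 1)(T - P)`; a sign analysis of `R - S` and `T - P` turns these two inequalities into
cases (a), (b), (c), which are pairwise exclusive by the signs alone.
-/

open Real

lemma pos_of_deriv_exp_const_mul_pos {g : ℝ → ℝ} {g' w r : ℝ} (hg : HasDerivAt g g' r)
    (hw : 0 < w) (h : 0 < deriv (fun r => exp (w * g r)) r) : 0 < g' := by
  rw [(hg.const_mul w).exp.deriv] at h
  exact pos_of_mul_pos_right (pos_of_mul_pos_right h (exp_pos _).le) hw.le

lemma hasDerivAt_mul_add_one_sub_mul (x y r : ℝ) :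
    HasDerivAt (fun r : ℝ => r * x + (1 - r) * y) (x - y) r := by
  have h := ((hasDerivAt_id r).mul_const x).add
    (((hasDerivAt_const r (1 : ℝ)).sub (hasDerivAt_id r)).mul_const y)
  exact h.congr_deriv (by simp; ring)

lemma gradient_pos_of_deriv_pos {N : ℕ} {R S T P w i r : ℝ} (hN : 0 < N) (hw : 0 < w)
    (h : 0 < deriv (fun r : ℝ => exp (w *
        ((r * R + (1 - r) * ((i * R + ((N : ℝ) - i) * S) / N))
       - (r * P + (1 - r) * ((i * T + ((N : ℝ) - i) * P) / N))))) r) :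
    0 < ((N : ℝ) - i) * (R - S) + i * (T - P) := by
  have hslope := pos_of_deriv_exp_const_mul_pos
    ((hasDerivAt_mul_add_one_sub_mul R _ r).sub (hasDerivAt_mul_add_one_sub_mul P _ r)) hw h
  have hN' : (0 : ℝ) < N := by exact_mod_cast hN
  have hscale : (N : ℝ) * (R - (i * R + ((N : ℝ) - i) * S) / N
      - (P - (i * T + ((N : ℝ) - i) * P) / N)) = ((N : ℝ) - i) * (R - S) + i * (T - P) := by
    field_simp
    ring
  rw [← hscale]
  positivity

lemma favouring_cases_of_endpoint_gradients {n R S T P : ℝ} (hn : 1 ≤ n)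
    (h₁ : 0 < (n - 1) * (R - S) + (T - P)) (h₂ : 0 < (R - S) + (n - 1) * (T - P)) :
    (R ≥ S ∧ T ≥ P ∧ (R > S ∨ T > P))
    ∨ (R > S ∧ T < P ∧ n < (R - S + P - T) / (P - T))
    ∨ (R < S ∧ T > P ∧ n < (S - R + T - P) / (S - R)) := by
  rcases lt_or_ge R S with hRS | hRS
  · have hTP : P < T := by nlinarith
    refine Or.inr (Or.inr ⟨hRS, hTP, ?_⟩)
    rw [lt_div_iff₀ (by linarith)]
    linarith
  rcases lt_or_ge T P with hTP | hTP
  · have hRS' : S < R := by nlinarith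
    refine Or.inr (Or.inl ⟨hRS', hTP, ?_⟩)
    rw [lt_div_iff₀ (by linarith)]
    linarith
  refine Or.inl ⟨hRS, hTP, ?_⟩
  by_contra! hzero
  nlinarith

lemma exactly_one_of_or_of_pairwise_not {A B C : Prop} (h : A ∨ B ∨ C)
    (hAB : ¬(A ∧ B)) (hAC : ¬(A ∧ C)) (hBC : ¬(B ∧ C)) :
    (A ∧ ¬B ∧ ¬C) ∨ (¬A ∧ B ∧ ¬C) ∨ (¬A ∧ ¬B ∧ C) := by
  tauto

/-- Proposition 2: full converse characterization of strong favouring. -/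
theorem strong_favouring_characterization (N : ℕ) (R S T P w : ℝ)
    (hN : 2 ≤ N) (hw : 0 < w)
    (hstrong : ∀ i : ℕ, 1 ≤ i → i ≤ N - 1 → ∀ r ∈ Set.Icc (0 : ℝ) 1,
      0 < deriv (fun r : ℝ => Real.exp (w *
        ((r * R + (1 - r) * ((i * R + ((N : ℝ) - i) * S) / N))
       - (r * P + (1 - r) * ((i * T + ((N : ℝ) - i) * P) / N))))) r) :
    ((R ≥ S ∧ T ≥ P ∧ (R > S ∨ T > P))
        ∧ ¬(R > S ∧ T < P ∧ (N : ℝ) < (R - S + P - T) / (P - T))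
        ∧ ¬(R < S ∧ T > P ∧ (N : ℝ) < (S - R + T - P) / (S - R)))
    ∨ (¬(R ≥ S ∧ T ≥ P ∧ (R > S ∨ T > P))
        ∧ (R > S ∧ T < P ∧ (N : ℝ) < (R - S + P - T) / (P - T))
        ∧ ¬(R < S ∧ T > P ∧ (N : ℝ) < (S - R + T - P) / (S - R)))
    ∨ (¬(R ≥ S ∧ T ≥ P ∧ (R > S ∨ T > P))
        ∧ ¬(R > S ∧ T < P ∧ (N : ℝ) < (R - S + P - T) / (P - T))
        ∧ (R < S ∧ T > P ∧ (N : ℝ) < (S - R + T - P) / (S - R))) := by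
  have hN0 : 0 < N := by omega
  have hr : (0 : ℝ) ∈ Set.Icc (0 : ℝ) 1 := ⟨le_rfl, zero_le_one⟩
  have hfirst := gradient_pos_of_deriv_pos hN0 hw (hstrong 1 le_rfl (by omega) 0 hr)
  have hlast := gradient_pos_of_deriv_pos hN0 hw (hstrong (N - 1) (by omega) le_rfl 0 hr)
  rw [Nat.cast_one, one_mul] at hfirst
  rw [Nat.cast_sub (by omega), Nat.cast_one, sub_sub_cancel, one_mul] at hlast
  refine exactly_one_of_or_of_pairwise_not
    (favouring_cases_of_endpoint_gradients (Nat.one_le_cast.mpr hN0) hfirst hlast) ?_ ?_ ?_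
  · rintro ⟨⟨-, hTP, -⟩, -, hTP', -⟩; linarith
  · rintro ⟨⟨hRS, -⟩, hRS', -⟩; linarith
  · rintro ⟨⟨hRS, -⟩, hRS', -⟩; linarith
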